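/- arXiv:1008.1409 — 6 statements merged into one kernel-verified Lean document; each statement's English description precedes it below -/
import Mathlib

section
/- For every complex b that is not a root of unity (b^k ≠ 1 for all k ≥ 1), positive integer n, and integer m with 1 ≤ m ≤ n: ∑_{k=m}^{n} C(n,k) C(k,m) (-1)^k / (1 - b^k) multiplied by (1 - b^n), minus the sum ∑_{j=m}^{n-1} [∑_{k=m}^{j} C(j,k) C(k,m) (-1)^k / (1 - b^k)] · C(n,j)(1-b)^{n-j} b^j, equals (-1)^m if n = m and 0 otherwise. (Equivalently, the coefficients β_m^{(n)} = s^{-m} ∑_{k=m}^{n} C(n,k)C(k,m)(-1)^k/(1-b^k) satisfy the recurrence s^m β_M^{(n)} = δ_{n,M}(-1)^M + ∑_{k=M}^{n} s^M β_M^{(k)} C(n,k)(1-b)^{n-k} b^k.) -/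
/-!
With `a k = C(k,m) (-1)^k / (1 - b^k)`, the inner sums are `β j = ∑_{k=m}^{j} C(j,k) a k`.
Since `C(n,j) C(j,k) = C(n,k) C(n-k,j-k)`, the binomial theorem gives
`∑_j C(n,j) C(j,k) x^j y^(n-j) = C(n,k) x^k (x+y)^(n-k)`. At `x = b`, `y = 1 - b` this lets one
exchange the order of summation and turn the left-hand side into
`∑_k C(n,k) a k (1 - b^k) = ∑_k C(n,k) C(k,m) (-1)^k`; at `x = -1`, `y = 1` it evaluates the
latter to `(-1)^m 0^(n-m)`.
-/

open Finset

theorem sum_Icc_choose_mul_choose_mul_pow_mul_pow {R : Type*} [CommSemiring R] (x y : R)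
    {k n : ℕ} (hkn : k ≤ n) :
    ∑ j ∈ Icc k n, (n.choose j : R) * j.choose k * x ^ j * y ^ (n - j)
      = n.choose k * x ^ k * (x + y) ^ (n - k) := by
  rw [← Ico_add_one_right_eq_Icc, sum_Ico_eq_sum_range, add_pow, mul_sum,
    Nat.sub_add_comm hkn]
  refine sum_congr rfl fun i hi => ?_
  have hi : i ≤ n - k := Nat.lt_succ_iff.mp (mem_range.mp hi)
  have hchoose : n.choose (k + i) * (k + i).choose k = n.choose k * (n - k).choose i := by
    simpa using Nat.choose_mul (n := n) (k := k + i) (s := k) (by omega)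
  rw [← Nat.cast_mul, hchoose, show n - (k + i) = n - k - i by omega, pow_add]
  push_cast
  ring

theorem sum_Icc_choose_mul_choose_mul_neg_one_pow {R : Type*} [CommRing R] {m n : ℕ}
    (hmn : m ≤ n) :
    ∑ k ∈ Icc m n, (n.choose k : R) * k.choose m * (-1) ^ k
      = if n = m then (-1) ^ m else 0 := by
  have h := sum_Icc_choose_mul_choose_mul_pow_mul_pow (-1 : R) 1 hmn
  simp only [one_pow, mul_one, neg_add_cancel] at h
  rw [h]
  split_ifs with hnm
  · simp [hnm]
  · simp [Nat.sub_ne_zero_of_lt (lt_of_le_of_ne hmn (Ne.symm hnm))]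

theorem sum_Icc_sum_Icc_choose_mul_bernstein {R : Type*} [CommRing R] (a : ℕ → R) (b : R)
    (m n : ℕ) :
    ∑ j ∈ Icc m n, (∑ k ∈ Icc m j, (j.choose k : R) * a k) * n.choose j * (1 - b) ^ (n - j) * b ^ j
      = ∑ k ∈ Icc m n, (n.choose k : R) * a k * b ^ k := by
  simp_rw [sum_mul]
  rw [sum_comm' (t' := Icc m n) (s' := fun k => Icc k n) (fun j k => by
    simp only [mem_Icc]; omega)]
  refine sum_congr rfl fun k hk => ?_
  have h := sum_Icc_choose_mul_choose_mul_pow_mul_pow b (1 - b) (mem_Icc.mp hk).2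
  rw [add_sub_cancel, one_pow, mul_one] at h
  calc ∑ j ∈ Icc k n, (j.choose k : R) * a k * n.choose j * (1 - b) ^ (n - j) * b ^ j
      = a k * ∑ j ∈ Icc k n, (n.choose j : R) * j.choose k * b ^ j * (1 - b) ^ (n - j) := by
        rw [mul_sum]; exact sum_congr rfl fun j _ => by ring
    _ = n.choose k * a k * b ^ k := by rw [h]; ring

theorem sum_Icc_choose_mul_one_sub_pow_sub_sum_Icc_bernstein {R : Type*} [CommRing R]
    (a : ℕ → R) (b : R) {m n : ℕ} (hn : 1 ≤ n) (hmn : m ≤ n) :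
    (∑ k ∈ Icc m n, (n.choose k : R) * a k) * (1 - b ^ n)
      - ∑ j ∈ Icc m (n - 1),
          (∑ k ∈ Icc m j, (j.choose k : R) * a k) * n.choose j * (1 - b) ^ (n - j) * b ^ j
      = ∑ k ∈ Icc m n, (n.choose k : R) * a k * (1 - b ^ k) := by
  obtain ⟨n, rfl⟩ := Nat.exists_eq_add_of_le' hn
  have hsplit := sum_Icc_succ_top hmn fun j =>
    (∑ k ∈ Icc m j, (j.choose k : R) * a k) * (n + 1).choose j * (1 - b) ^ (n + 1 - j) * b ^ j
  rw [sum_Icc_sum_Icc_choose_mul_bernstein, Nat.sub_self, Nat.choose_self] at hsplit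
  rw [Nat.add_sub_cancel, eq_sub_of_add_eq hsplit.symm]
  simp only [mul_one_sub, sum_sub_distrib]
  push_cast
  ring

theorem direct_formula_satisfies_recurrence (b : ℂ) (hb : ∀ k : ℕ, 1 ≤ k → b ^ k ≠ 1)
    (n m : ℕ) (hm : 1 ≤ m) (hmn : m ≤ n) :
    (∑ k ∈ Finset.Icc m n,
        (n.choose k : ℂ) * (k.choose m : ℂ) * (-1) ^ k / (1 - b ^ k)) * (1 - b ^ n)
      - ∑ j ∈ Finset.Icc m (n - 1),
          (∑ k ∈ Finset.Icc m j,
              (j.choose k : ℂ) * (k.choose m : ℂ) * (-1) ^ k / (1 - b ^ k))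
            * (n.choose j : ℂ) * (1 - b) ^ (n - j) * b ^ j
      = if n = m then (-1) ^ m else 0 := by
  set a : ℕ → ℂ := fun k => k.choose m * (-1) ^ k / (1 - b ^ k)
  have hβ (j : ℕ) : ∑ k ∈ Icc m j, (j.choose k : ℂ) * k.choose m * (-1) ^ k / (1 - b ^ k)
      = ∑ k ∈ Icc m j, (j.choose k : ℂ) * a k :=
    sum_congr rfl fun k _ => by simp only [a]; ring
  simp only [hβ]
  rw [sum_Icc_choose_mul_one_sub_pow_sub_sum_Icc_bernstein a b (hm.trans hmn) hmn,
    ← sum_Icc_choose_mul_choose_mul_neg_one_pow hmn]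
  refine sum_congr rfl fun k hk => ?_
  have hbk : 1 - b ^ k ≠ 0 := sub_ne_zero.mpr (hb k (hm.trans (mem_Icc.mp hk).1)).symm
  simp only [a]
  field_simp
end

section
/- For 0 < b < 1 and every positive integer m, lim_{n→∞} ∑_{i=0}^{m-1} (1 - (1-b^i)^n) = m; consequently lim_{n→∞} α̃_n(b^m) = m, where α̃_n(x) = ∑_{k=1}^n C(n,k)(-1)^{k+1}(1-x^k)/(1-b^k). -/
open Filter Topology Finset

/-!
Expanding each quotient `(1 - b ^ (m k)) / (1 - b ^ k)` as the geometric sum `∑_{i<m} (b ^ i) ^ k`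
and exchanging the two sums, the binomial theorem turns `α̃_n(b ^ m)` into
`∑_{i<m} (1 - (1 - b ^ i) ^ n)`. Since `0 < b ^ i ≤ 1`, each of these `m` terms tends to `1`.
-/

theorem sum_Icc_choose_mul_neg_one_pow_succ_mul_pow {R : Type*} [CommRing R] (x : R) (n : ℕ) :
    ∑ k ∈ Icc 1 n, (n.choose k : R) * (-1) ^ (k + 1) * x ^ k = 1 - (1 - x) ^ n := by
  have hbinom : (1 - x) ^ n = ∑ k ∈ range (n + 1), (n.choose k : R) * (-x) ^ k := by
    rw [sub_eq_neg_add, add_pow]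
    simp only [one_pow, mul_one, mul_comm]
  rw [hbinom, range_eq_Ico, sum_eq_sum_Ico_succ_bot (Nat.succ_pos n), Nat.succ_eq_add_one,
    Ico_add_one_right_eq_Icc]
  simp [neg_pow x, pow_succ, sum_neg_distrib, mul_assoc]

theorem div_one_sub_eq_geom_sum {K : Type*} [Field K] {x : K} (hx : x ≠ 1) (m : ℕ) :
    (1 - x ^ m) / (1 - x) = ∑ i ∈ range m, x ^ i := by
  rw [geom_sum_eq hx, ← neg_sub, ← neg_sub x, neg_div_neg_eq]

theorem sum_Icc_choose_mul_neg_one_pow_succ_mul_div_eq {K : Type*} [Field K] {b : K}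
    (hb : ∀ k, 0 < k → b ^ k ≠ 1) (m n : ℕ) :
    ∑ k ∈ Icc 1 n, (n.choose k : K) * (-1) ^ (k + 1) * ((1 - (b ^ m) ^ k) / (1 - b ^ k))
      = ∑ i ∈ range m, (1 - (1 - b ^ i) ^ n) := by
  have hterm : ∀ k ∈ Icc 1 n,
      (1 - (b ^ m) ^ k) / (1 - b ^ k) = ∑ i ∈ range m, (b ^ i) ^ k := by
    intro k hk
    have hswap (j : ℕ) : (b ^ j) ^ k = (b ^ k) ^ j := by rw [← pow_mul, ← pow_mul, mul_comm]
    simp only [hswap]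
    exact div_one_sub_eq_geom_sum (hb k (mem_Icc.1 hk).1) m
  rw [sum_congr rfl fun k hk => by rw [hterm k hk, mul_sum], sum_comm]
  exact sum_congr rfl fun i _ => sum_Icc_choose_mul_neg_one_pow_succ_mul_pow (b ^ i) n

theorem tendsto_one_sub_one_sub_pow_nhds_one {R : Type*} [SeminormedRing R] {x : R}
    (hx : ‖1 - x‖ < 1) : Tendsto (fun n : ℕ => 1 - (1 - x) ^ n) atTop (𝓝 1) := by
  simpa using (tendsto_pow_atTop_nhds_zero_of_norm_lt_one hx).const_sub 1

theorem alpha_limit_at_integer_powers_general (b : ℝ) (hb0 : 0 < b) (hb1 : b < 1)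
    (m : ℕ) :
    Tendsto (fun n : ℕ => ∑ i ∈ Finset.range m, (1 - (1 - b ^ i) ^ n)) atTop (𝓝 m)
    ∧ Tendsto (fun n : ℕ =>
        ∑ k ∈ Finset.Icc 1 n,
          (n.choose k : ℝ) * (-1) ^ (k + 1) * ((1 - (b ^ m) ^ k) / (1 - b ^ k)))
        atTop (𝓝 m) := by
  have hlim : Tendsto (fun n : ℕ => ∑ i ∈ range m, (1 - (1 - b ^ i) ^ n)) atTop (𝓝 m) := by
    have hnorm (i : ℕ) : ‖1 - b ^ i‖ < 1 := by
      rw [Real.norm_eq_abs, abs_lt]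
      constructor <;> linarith [pow_pos hb0 i, pow_le_one₀ (n := i) hb0.le hb1.le]
    simpa using tendsto_finsetSum (range m) fun i _ =>
      tendsto_one_sub_one_sub_pow_nhds_one (hnorm i)
  have hb (k : ℕ) (hk : 0 < k) : b ^ k ≠ 1 := (pow_lt_one₀ hb0.le hb1 hk.ne').ne
  exact ⟨hlim, by simpa only [sum_Icc_choose_mul_neg_one_pow_succ_mul_div_eq hb] using hlim⟩

theorem alpha_limit_at_integer_powers (b : ℝ) (hb0 : 0 < b) (hb1 : b < 1)
    (m : ℕ) (hm : 1 ≤ m) :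
    Tendsto (fun n : ℕ => ∑ i ∈ Finset.range m, (1 - (1 - b ^ i) ^ n)) atTop (𝓝 m)
    ∧ Tendsto (fun n : ℕ =>
        ∑ k ∈ Finset.Icc 1 n,
          (n.choose k : ℝ) * (-1) ^ (k + 1) * ((1 - (b ^ m) ^ k) / (1 - b ^ k)))
        atTop (𝓝 m) :=
  alpha_limit_at_integer_powers_general b hb0 hb1 m
end

section
/- For real κ with Re(κ) > 0 (or simply real κ > 0) and every integer k ≥ 1, |C(κ,k)| ≤ e^{|κ|^2 + Re(κ)} / k^{1 + Re(κ)}, where C(κ,k) is the generalized binomial coefficient. -/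
/-!
Write `t = ‖κ‖`, `r = Re κ` and `a k = k ^ (1 + r) * ‖C(κ, k)‖`. Since
`‖κ - k‖ ^ 2 = k ^ 2 (1 - 2r/k + t²/k²) ≤ k ^ 2 exp (t²/k² - 2r/k)` and `(1 + 1/k) ^ r ≤ exp (r/k)`,
the factors `exp (± r/k)` cancel and `a (k + 1) ≤ exp (t² / (2k²)) * a k` for `k ≥ 1`.
The first step is treated directly: `a 2 = 2 ^ r * t * ‖κ - 1‖ ≤ 2 ^ r * exp (t²/2)`, because
`t² (t² + 1) ≤ exp t²`. As `∑_{k ≥ 2} 1/k² ≤ 1`, telescoping gives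
`a k ≤ 2 ^ r * exp t² ≤ exp (r + t²)`.
-/

noncomputable def gchooseC (κ : ℂ) (k : ℕ) : ℂ :=
  (∏ i ∈ Finset.range k, (κ - i)) / k.factorial

open Real

theorem Real.mul_add_one_le_exp {u : ℝ} (hu : 0 ≤ u) : u * (u + 1) ≤ exp u := by
  have h := sum_le_exp_of_nonneg hu 4
  simp only [Finset.sum_range_succ, Finset.sum_range_zero, Nat.factorial] at h
  norm_num at h
  nlinarith [sq_nonneg (u - 2), mul_nonneg hu (sq_nonneg (u - 2))]

theorem Real.add_one_rpow_le {x r : ℝ} (hx : 0 < x) (hr : 0 ≤ r) :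
    (x + 1) ^ r ≤ x ^ r * exp (r / x) := by
  have hlog : log (x + 1) ≤ log x + 1 / x := by
    have := log_le_sub_one_of_pos (show 0 < (x + 1) / x by positivity)
    rw [log_div (by positivity) hx.ne'] at this
    have e : (x + 1) / x - 1 = 1 / x := by field_simp; ring
    linarith
  rw [rpow_def_of_pos (by positivity), rpow_def_of_pos hx, ← exp_add]
  gcongr
  calc log (x + 1) * r ≤ (log x + 1 / x) * r := mul_le_mul_of_nonneg_right hlog hr
    _ = log x * r + r / x := by ring

theorem Complex.norm_sub_ofReal_le_mul_exp (κ : ℂ) {x : ℝ} (hx : 0 < x) :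
    ‖κ - x‖ ≤ x * Real.exp (‖κ‖ ^ 2 / (2 * x ^ 2) - κ.re / x) := by
  have hsq : ‖κ - x‖ ^ 2 = x ^ 2 * (‖κ‖ ^ 2 / x ^ 2 - 2 * κ.re / x + 1) := by
    rw [Complex.sq_norm, Complex.sq_norm, Complex.normSq_apply, Complex.normSq_apply]
    simp only [Complex.sub_re, Complex.sub_im, Complex.ofReal_re, Complex.ofReal_im, sub_zero]
    field_simp
    ring
  have hexp : (x * Real.exp (‖κ‖ ^ 2 / (2 * x ^ 2) - κ.re / x)) ^ 2
      = x ^ 2 * Real.exp (‖κ‖ ^ 2 / x ^ 2 - 2 * κ.re / x) := by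
    rw [mul_pow, ← Real.exp_nat_mul]
    congr 2
    field_simp
    ring
  refine (pow_le_pow_iff_left₀ (norm_nonneg _) (by positivity) two_ne_zero).mp ?_
  rw [hsq, hexp]
  gcongr
  exact Real.add_one_le_exp _

theorem gchooseC_one (κ : ℂ) : gchooseC κ 1 = κ := by
  simp [gchooseC]

theorem gchooseC_succ (κ : ℂ) (k : ℕ) :
    gchooseC κ (k + 1) = gchooseC κ k * (κ - k) / (k + 1) := by
  simp only [gchooseC, Finset.prod_range_succ, Nat.factorial_succ, Nat.cast_mul]
  push_cast
  field_simp

theorem norm_mul_norm_sub_one_le_exp {κ : ℂ} (hκ : 0 ≤ κ.re) :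
    ‖κ‖ * ‖κ - 1‖ ≤ exp (‖κ‖ ^ 2 / 2) := by
  have hsq : ‖κ - 1‖ ^ 2 ≤ ‖κ‖ ^ 2 + 1 := by
    rw [Complex.sq_norm, Complex.sq_norm, Complex.normSq_apply, Complex.normSq_apply]
    simp only [Complex.sub_re, Complex.sub_im, Complex.one_re, Complex.one_im, sub_zero]
    nlinarith
  refine (pow_le_pow_iff_left₀ (by positivity) (by positivity) two_ne_zero).mp ?_
  calc (‖κ‖ * ‖κ - 1‖) ^ 2 = ‖κ‖ ^ 2 * ‖κ - 1‖ ^ 2 := mul_pow _ _ _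
    _ ≤ ‖κ‖ ^ 2 * (‖κ‖ ^ 2 + 1) := by gcongr
    _ ≤ exp (‖κ‖ ^ 2) := mul_add_one_le_exp (sq_nonneg _)
    _ = exp (‖κ‖ ^ 2 / 2) ^ 2 := by rw [← exp_nat_mul]; ring_nf

theorem rpow_mul_norm_gchooseC_succ_le {κ : ℂ} (hκ : 0 ≤ κ.re) {k : ℕ} (hk : 1 ≤ k) :
    ((k + 1 : ℕ) : ℝ) ^ (1 + κ.re) * ‖gchooseC κ (k + 1)‖
      ≤ exp (‖κ‖ ^ 2 / (2 * k ^ 2)) * ((k : ℝ) ^ (1 + κ.re) * ‖gchooseC κ k‖) := by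
  have hx : (0 : ℝ) < k := by exact_mod_cast hk
  have hnorm : ‖gchooseC κ (k + 1)‖ = ‖gchooseC κ k‖ * ‖κ - k‖ / (k + 1) := by
    rw [gchooseC_succ, norm_div, norm_mul]
    norm_cast
  have hfactor := Complex.norm_sub_ofReal_le_mul_exp κ hx
  rw [Complex.ofReal_natCast] at hfactor
  calc ((k + 1 : ℕ) : ℝ) ^ (1 + κ.re) * ‖gchooseC κ (k + 1)‖
      = (k + 1 : ℝ) ^ κ.re * ‖κ - k‖ * ‖gchooseC κ k‖ := by
        rw [hnorm, Nat.cast_succ, rpow_add (by positivity), rpow_one]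
        field_simp
    _ ≤ (k ^ κ.re * exp (κ.re / k)) * (k * exp (‖κ‖ ^ 2 / (2 * k ^ 2) - κ.re / k))
          * ‖gchooseC κ k‖ := by
        gcongr
        exact add_one_rpow_le hx hκ
    _ = exp (‖κ‖ ^ 2 / (2 * k ^ 2)) * ((k : ℝ) ^ (1 + κ.re) * ‖gchooseC κ k‖) := by
        rw [rpow_add hx, rpow_one, exp_sub]
        field_simp

theorem rpow_mul_norm_gchooseC_succ_le_two_rpow_mul_exp {κ : ℂ} (hκ : 0 ≤ κ.re) {k : ℕ}
    (hk : 1 ≤ k) :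
    ((k + 1 : ℕ) : ℝ) ^ (1 + κ.re) * ‖gchooseC κ (k + 1)‖
      ≤ 2 ^ κ.re * exp (‖κ‖ ^ 2 - ‖κ‖ ^ 2 / (2 * k)) := by
  induction k, hk using Nat.le_induction with
  | base =>
    have h2 : gchooseC κ 2 = κ * (κ - 1) / 2 := by
      rw [gchooseC_succ, gchooseC_one]; norm_num
    rw [h2, norm_div, norm_mul, Complex.norm_ofNat]
    simp only [Nat.reduceAdd, Nat.cast_ofNat, Nat.cast_one, mul_one]
    calc (2 : ℝ) ^ (1 + κ.re) * (‖κ‖ * ‖κ - 1‖ / 2) = 2 ^ κ.re * (‖κ‖ * ‖κ - 1‖) := by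
          rw [rpow_add two_pos, rpow_one]; ring
      _ ≤ 2 ^ κ.re * exp (‖κ‖ ^ 2 - ‖κ‖ ^ 2 / 2) := by
          gcongr
          exact (norm_mul_norm_sub_one_le_exp hκ).trans_eq (by congr 1; ring)
  | succ k hk ih =>
    have hx : (0 : ℝ) < k := by exact_mod_cast hk
    -- `1/(k+1)² ≤ 1/k - 1/(k+1)`: the invariant telescopes.
    have htel : ‖κ‖ ^ 2 / (2 * (k + 1 : ℕ) ^ 2)
        ≤ ‖κ‖ ^ 2 / (2 * k) - ‖κ‖ ^ 2 / (2 * (k + 1 : ℕ)) := by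
      push_cast
      rw [div_sub_div _ _ (by positivity) (by positivity),
        div_le_div_iff₀ (by positivity) (by positivity)]
      nlinarith [sq_nonneg ‖κ‖]
    calc _ ≤ exp (‖κ‖ ^ 2 / (2 * (k + 1 : ℕ) ^ 2))
          * (((k + 1 : ℕ) : ℝ) ^ (1 + κ.re) * ‖gchooseC κ (k + 1)‖) :=
          rpow_mul_norm_gchooseC_succ_le hκ (by omega)
      _ ≤ exp (‖κ‖ ^ 2 / (2 * (k + 1 : ℕ) ^ 2))
          * (2 ^ κ.re * exp (‖κ‖ ^ 2 - ‖κ‖ ^ 2 / (2 * k))) := by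
          gcongr
      _ ≤ 2 ^ κ.re * exp (‖κ‖ ^ 2 - ‖κ‖ ^ 2 / (2 * (k + 1 : ℕ))) := by
          rw [mul_left_comm, ← exp_add]
          gcongr
          linarith

theorem rpow_mul_norm_gchooseC_le_two_rpow_mul_exp {κ : ℂ} (hκ : 0 ≤ κ.re) {k : ℕ}
    (hk : 1 ≤ k) :
    (k : ℝ) ^ (1 + κ.re) * ‖gchooseC κ k‖ ≤ 2 ^ κ.re * exp (‖κ‖ ^ 2) := by
  obtain rfl | ⟨m, hm, rfl⟩ : k = 1 ∨ ∃ m, 1 ≤ m ∧ k = m + 1 :=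
    (eq_or_lt_of_le hk).imp Eq.symm fun h => ⟨k - 1, by omega, by omega⟩
  · rw [gchooseC_one, Nat.cast_one, one_rpow, one_mul]
    have ht : ‖κ‖ ≤ exp (‖κ‖ ^ 2) := by
      nlinarith [add_one_le_exp (‖κ‖ ^ 2), sq_nonneg (‖κ‖ - 1)]
    nlinarith [one_le_rpow one_le_two hκ, exp_pos (‖κ‖ ^ 2)]
  · refine (rpow_mul_norm_gchooseC_succ_le_two_rpow_mul_exp hκ hm).trans ?_
    gcongr
    linarith [show 0 ≤ ‖κ‖ ^ 2 / (2 * m) by positivity]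

theorem gchoose_bound (κ : ℂ) (hκ : 0 < κ.re) (k : ℕ) (hk : 1 ≤ k) :
    ‖gchooseC κ k‖
      ≤ Real.exp (‖κ‖ ^ 2 + κ.re) / (k : ℝ) ^ (1 + κ.re) := by
  have hk0 : (0 : ℝ) < k := by exact_mod_cast hk
  have htwo : (2 : ℝ) ^ κ.re ≤ exp κ.re := by
    rw [← exp_one_rpow]
    gcongr
    linarith [add_one_le_exp 1]
  rw [le_div_iff₀ (by positivity), mul_comm, exp_add, mul_comm (exp _)]
  calc (k : ℝ) ^ (1 + κ.re) * ‖gchooseC κ k‖ ≤ 2 ^ κ.re * exp (‖κ‖ ^ 2) :=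
        rpow_mul_norm_gchooseC_le_two_rpow_mul_exp hκ.le hk
    _ ≤ exp κ.re * exp (‖κ‖ ^ 2) := by gcongr
end

section
/- For complex κ with Re(κ) > 0, the series ∑_{n=0}^{∞} C(κ,n) z^n converges absolutely for every z on the unit circle |z| = 1, and its sum equals (1+z)^κ. -/
open Filter Metric Set

lemma summable_of_eventually_rpow_mul_succ_le {a : ℕ → ℝ} {s : ℝ} (hs : 1 < s)
    (ha : ∀ n, 0 ≤ a n) (h : ∀ᶠ n : ℕ in atTop, ((n + 1 : ℕ) : ℝ) ^ s * a (n + 1) ≤ n ^ s * a n) :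
    Summable a := by
  obtain ⟨N, hN⟩ := eventually_atTop.1 h
  have hbound : ∀ n ≥ N, (n : ℝ) ^ s * a n ≤ (N : ℝ) ^ s * a N := by
    intro n hn
    induction n, hn using Nat.le_induction with
    | base => rfl
    | succ n hn ih => exact (hN n hn).trans ih
  refine summable_of_isBigO_nat (Real.summable_nat_rpow.2 (neg_lt_neg hs)) ?_
  refine Asymptotics.IsBigO.of_bound ((N : ℝ) ^ s * a N) ?_
  filter_upwards [eventually_ge_atTop (max N 1)] with n hn
  have hn0 : (0 : ℝ) < n := by exact_mod_cast (le_max_right N 1).trans hn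
  rw [Real.norm_of_nonneg (ha n), Real.norm_of_nonneg (by positivity), Real.rpow_neg hn0.le,
    ← div_eq_mul_inv, le_div_iff₀ (by positivity), mul_comm]
  exact hbound n ((le_max_left N 1).trans hn)

lemma add_one_rpow_sub_one_mul_le_rpow {x p : ℝ} (hx : 0 ≤ x) (hp : 1 ≤ p) :
    (x + 1) ^ (p - 1) * (x + 1 - p) ≤ x ^ p := by
  have hx1 : 0 < x + 1 := by linarith
  have hbern := one_add_mul_self_le_rpow_one_add (s := -(x + 1)⁻¹)
    (by rw [neg_le_neg_iff]; exact inv_le_one_of_one_le₀ (by linarith)) hp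
  rw [show 1 + -(x + 1)⁻¹ = x / (x + 1) by field_simp; ring, Real.div_rpow hx hx1.le,
    le_div_iff₀ (by positivity)] at hbern
  calc (x + 1) ^ (p - 1) * (x + 1 - p) = (1 + p * -(x + 1)⁻¹) * (x + 1) ^ p := by
        rw [Real.rpow_sub_one hx1.ne']; field_simp; ring
    _ ≤ x ^ p := hbern

lemma eventually_norm_sub_natCast_le {κ : ℂ} (hκ : 0 < κ.re) :
    ∀ᶠ n : ℕ in atTop, ‖κ - n‖ ≤ n - κ.re / 2 := by
  filter_upwards [tendsto_natCast_atTop_atTop.eventually_ge_atTop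
    ((κ.im ^ 2 + κ.re ^ 2) / κ.re)] with n hn
  rw [div_le_iff₀ hκ] at hn
  have hpos : 0 ≤ (n : ℝ) - κ.re / 2 := by nlinarith
  rw [← pow_le_pow_iff_left₀ (norm_nonneg _) hpos two_ne_zero, Complex.sq_norm,
    Complex.normSq_apply]
  simp only [Complex.sub_re, Complex.natCast_re, Complex.sub_im, Complex.natCast_im]
  nlinarith

lemma norm_gchooseC_succ (κ : ℂ) (n : ℕ) :
    ‖gchooseC κ (n + 1)‖ = ‖gchooseC κ n‖ * ‖κ - n‖ / (n + 1) := by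
  rw [gchooseC, gchooseC, Finset.prod_range_succ, Nat.factorial_succ, Nat.cast_mul, norm_div,
    norm_div, norm_mul, norm_mul, Complex.norm_natCast, Complex.norm_natCast]
  push_cast
  field_simp

lemma summable_norm_gchooseC {κ : ℂ} (hκ : 0 < κ.re) : Summable (‖gchooseC κ ·‖) := by
  set s := 1 + κ.re / 2 with hs
  refine summable_of_eventually_rpow_mul_succ_le (by linarith : 1 < s) (fun n => norm_nonneg _) ?_
  filter_upwards [eventually_norm_sub_natCast_le hκ] with n hn
  have hn1 : (0 : ℝ) < n + 1 := by positivity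
  calc ((n + 1 : ℕ) : ℝ) ^ s * ‖gchooseC κ (n + 1)‖
      = ‖gchooseC κ n‖ * ((n + 1) ^ (s - 1) * ‖κ - n‖) := by
        rw [norm_gchooseC_succ, Nat.cast_succ, Real.rpow_sub_one hn1.ne']; field_simp
    _ ≤ ‖gchooseC κ n‖ * ((n + 1) ^ (s - 1) * (n + 1 - s)) := by
        gcongr; linarith
    _ ≤ ‖gchooseC κ n‖ * n ^ s := by
        gcongr; exact add_one_rpow_sub_one_mul_le_rpow n.cast_nonneg (by linarith)
    _ = n ^ s * ‖gchooseC κ n‖ := mul_comm _ _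

lemma gchooseC_eq_choose (κ : ℂ) (n : ℕ) : gchooseC κ n = Ring.choose κ n := by
  rw [gchooseC, div_eq_iff (by simp [Nat.factorial_ne_zero]), mul_comm, ← nsmul_eq_mul,
    ← Ring.descPochhammer_eq_factorial_smul_choose, ← Polynomial.aeval_eq_smeval,
    ← descPochhammer_eval_eq_prod_range, Polynomial.aeval_def, ← Polynomial.eval_map,
    descPochhammer_map]

lemma hasSum_choose_mul_pow (κ : ℂ) {w : ℂ} (hw : ‖w‖ < 1) :
    HasSum (fun n => Ring.choose κ n * w ^ n) ((1 + w) ^ κ) := by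
  have hsum := (Complex.one_add_cpow_hasFPowerSeriesOnBall_zero (a := κ)).hasSum (y := w)
    (by simpa [← ofReal_norm] using hw)
  simpa [binomialSeries, FormalMultilinearSeries.ofScalars_apply_eq, mul_comm] using hsum

lemma continuousOn_one_add_cpow {κ : ℂ} (hκ : 0 < κ.re) :
    ContinuousOn (fun w : ℂ => (1 + w) ^ κ) (closedBall 0 1) := by
  intro w hw
  have hre : 0 ≤ (1 + w).re := by
    have hre_le := (Complex.abs_re_le_norm w).trans (mem_closedBall_zero_iff.1 hw)
    rw [Complex.add_re, Complex.one_re]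
    linarith [neg_abs_le w.re]
  exact ((Complex.continuousAt_cpow_const_of_re_pos (Or.inl hre) hκ).comp
    (continuous_const.add continuous_id).continuousAt).continuousWithinAt

lemma continuousOn_tsum_mul_pow {𝕜 : Type*} [NormedField 𝕜] [CompleteSpace 𝕜] {a : ℕ → 𝕜}
    (ha : Summable (‖a ·‖)) : ContinuousOn (fun w => ∑' n, a n * w ^ n) (closedBall 0 1) := by
  refine continuousOn_tsum (fun n => (continuous_const.mul (continuous_pow n)).continuousOn) ha ?_
  intro n w hw
  rw [norm_mul, norm_pow]
  exact mul_le_of_le_one_right (norm_nonneg _)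
    (pow_le_one₀ (norm_nonneg _) (mem_closedBall_zero_iff.1 hw))

theorem binomial_series_unit_circle (κ : ℂ) (hκ : 0 < κ.re) (z : ℂ)
    (hz : ‖z‖ = 1) :
    Summable (fun n : ℕ => ‖gchooseC κ n * z ^ n‖)
    ∧ ∑' n : ℕ, gchooseC κ n * z ^ n = (1 + z) ^ κ := by
  have hsum := summable_norm_gchooseC hκ
  refine ⟨hsum.congr fun n => by simp [hz], ?_⟩
  have hdisk : EqOn (fun w => ∑' n, gchooseC κ n * w ^ n) (fun w => (1 + w) ^ κ) (ball 0 1) :=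
    fun w hw => by
      simp only [gchooseC_eq_choose]
      exact (hasSum_choose_mul_pow κ (mem_ball_zero_iff.1 hw)).tsum_eq
  exact hdisk.of_subset_closure (continuousOn_tsum_mul_pow hsum) (continuousOn_one_add_cpow hκ)
    ball_subset_closedBall (closure_ball 0 one_ne_zero).ge (mem_closedBall_zero_iff.2 hz.le)
end

section
/- For 0 < b < 1, define R_j^{(n)} = ∑_{i=0}^{j} C(j,i) (-1)^{j-i} (1-b^i)^n for integers j, n ≥ 1. Then R_j^{(n)} = (-1)^{j-n} ∑_{k=0}^{n} C(n,k) (-1)^{n-k} (1-b^k)^j, i.e., |R_j^{(n)}| = |R_n^{(j)}|. -/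
/-!
Writing `(-1) ^ (j - i) = (-1) ^ j * (-1) ^ i`, both sides become `± T j n` and `± T n j` with
`T p q = ∑ i, C(p, i) (-1)^i (1 - b^i)^q`. Expanding `(1 - b^i)^q` binomially turns `T p q` into
`∑ i k, C(p, i) C(q, k) (-1)^(i + k) b^(i k)`, which is symmetric in `p` and `q`.
-/

open Finset

section CommRing

variable {R : Type*} [CommRing R]

theorem one_sub_pow_eq_sum (x : R) (n : ℕ) :
    (1 - x) ^ n = ∑ k ∈ range (n + 1), (n.choose k : R) * (-1) ^ k * x ^ k := by
  rw [sub_eq_neg_add, add_pow]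
  refine sum_congr rfl fun k _ => ?_
  rw [neg_pow, one_pow, mul_one]
  ring

theorem neg_one_pow_sub_of_le {i p : ℕ} (h : i ≤ p) :
    (-1 : R) ^ (p - i) = (-1) ^ p * (-1) ^ i := by
  rw [← pow_add, show p + i = p - i + 2 * i by omega, pow_add, pow_mul, neg_one_sq, one_pow,
    mul_one]

theorem sum_choose_mul_neg_one_pow_mul_one_sub_pow_comm (b : R) (p q : ℕ) :
    ∑ i ∈ range (p + 1), (p.choose i : R) * (-1) ^ i * (1 - b ^ i) ^ q
      = ∑ k ∈ range (q + 1), (q.choose k : R) * (-1) ^ k * (1 - b ^ k) ^ p := by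
  simp only [one_sub_pow_eq_sum, mul_sum]
  rw [sum_comm]
  refine sum_congr rfl fun k _ => sum_congr rfl fun i _ => ?_
  rw [pow_right_comm]
  ring

theorem sum_choose_mul_neg_one_pow_sub_mul (p : ℕ) (f : ℕ → R) :
    ∑ i ∈ range (p + 1), (p.choose i : R) * (-1) ^ (p - i) * f i
      = (-1) ^ p * ∑ i ∈ range (p + 1), (p.choose i : R) * (-1) ^ i * f i := by
  rw [mul_sum]
  refine sum_congr rfl fun i hi => ?_
  rw [neg_one_pow_sub_of_le (Nat.lt_succ_iff.mp (mem_range.mp hi))]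
  ring

end CommRing

theorem R_symmetry_general (b : ℝ) (j n : ℕ) :
    ∑ i ∈ Finset.range (j + 1),
        (j.choose i : ℝ) * (-1) ^ (j - i) * (1 - b ^ i) ^ n
      = (-1 : ℝ) ^ ((j : ℤ) - (n : ℤ)) *
          ∑ k ∈ Finset.range (n + 1),
            (n.choose k : ℝ) * (-1) ^ (n - k) * (1 - b ^ k) ^ j := by
  have hsign : (-1 : ℝ) ^ ((j : ℤ) - (n : ℤ)) * (-1) ^ n = (-1) ^ j := by
    rw [← zpow_natCast, ← zpow_add₀ (by norm_num), sub_add_cancel, zpow_natCast]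
  rw [sum_choose_mul_neg_one_pow_sub_mul, sum_choose_mul_neg_one_pow_sub_mul, ← mul_assoc, hsign,
    sum_choose_mul_neg_one_pow_mul_one_sub_pow_comm]

theorem R_symmetry (b : ℝ) (hb0 : 0 < b) (hb1 : b < 1) (j n : ℕ)
    (hj : 1 ≤ j) (hn : 1 ≤ n) :
    ∑ i ∈ Finset.range (j + 1),
        (j.choose i : ℝ) * (-1) ^ (j - i) * (1 - b ^ i) ^ n
      = (-1 : ℝ) ^ ((j : ℤ) - (n : ℤ)) *
          ∑ k ∈ Finset.range (n + 1),
            (n.choose k : ℝ) * (-1) ^ (n - k) * (1 - b ^ k) ^ j :=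
  R_symmetry_general b j n
end

section
/- For 0 < b < 1 and 0 < x < 1, with α̃_n(y) = ∑_{k=1}^{n} C(n,k)(-1)^{k+1}(1-y^k)/(1-b^k), the identity α̃_n(b^x) = x - ∑_{j=1}^{∞} C(x, j+1) R_j^{(n)} holds, where R_j^{(n)} = ∑_{i=0}^{j} C(j,i)(-1)^{j-i}(1-b^i)^n and C(x,j+1) is the generalized binomial coefficient. -/
/-!
Expanding `(1 - b^i)^n` binomially and exchanging the two finite sums gives
`R_j^{(n)} = ∑_{k=1}^n C(n,k) (-1)^k (b^k - 1)^j`. The series therefore splits into `n` series,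
the `k`-th being the tail of the binomial series of `(1 + (b^k - 1))^x = (b^x)^k`, which converges
because `|b^k - 1| < 1`.
-/

noncomputable def gchoose (x : ℝ) (j : ℕ) : ℝ :=
  (∏ i ∈ Finset.range j, (x - i)) / j.factorial

open Finset

lemma gchoose_eq_ringChoose (x : ℝ) (j : ℕ) : gchoose x j = Ring.choose x j := by
  rw [Ring.choose_eq_smul, ← Polynomial.aeval_eq_smeval, Polynomial.aeval_def,
    Polynomial.eval₂_eq_eval_map, descPochhammer_map, descPochhammer_eval_eq_prod_range, gchoose,
    smul_eq_mul, div_eq_inv_mul]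

lemma hasSum_choose_mul_pow_s14 (a : ℝ) {s : ℝ} (hs : |s| < 1) :
    HasSum (fun j : ℕ => Ring.choose a j * s ^ j) ((1 + s) ^ a) := by
  have hs' : s ∈ Metric.eball (0 : ℝ) 1 := by
    simpa [Real.enorm_eq_ofReal_abs, ENNReal.ofReal_lt_one] using hs
  simpa [FormalMultilinearSeries.ofScalars_apply_eq, binomialSeries, mul_comm] using
    Real.one_add_rpow_hasFPowerSeriesOnBall_zero.hasSum hs'

lemma hasSum_choose_add_two_mul_pow (a : ℝ) {s : ℝ} (hs : |s| < 1) (hs₀ : s ≠ 0) :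
    HasSum (fun m : ℕ => Ring.choose a (m + 2) * s ^ (m + 1)) (((1 + s) ^ a - 1) / s - a) := by
  have htail := ((hasSum_nat_add_iff' 2).mpr (hasSum_choose_mul_pow_s14 a hs)).div_const s
  have hterm (m : ℕ) :
      Ring.choose a (m + 2) * s ^ (m + 2) / s = Ring.choose a (m + 2) * s ^ (m + 1) := by
    rw [pow_succ s (m + 1), mul_div_assoc, mul_div_cancel_right₀ _ hs₀]
  have hval :
      ((1 + s) ^ a - ∑ i ∈ range 2, Ring.choose a i * s ^ i) / s =
        ((1 + s) ^ a - 1) / s - a := by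
    simp only [sum_range_succ, sum_range_zero, Ring.choose_zero_right, Ring.choose_one_right]
    field_simp
    ring
  simpa only [hterm, hval] using htail

lemma sum_range_choose_mul_neg_one_pow_mul_one_sub_pow {R : Type*} [CommRing R]
    (y : R) (n J : ℕ) :
    ∑ i ∈ range (J + 1), (J.choose i : R) * (-1) ^ (J - i) * (1 - y ^ i) ^ n
      = ∑ k ∈ range (n + 1), (n.choose k : R) * (-1) ^ k * (y ^ k - 1) ^ J := by
  have h₁ (i : ℕ) : (1 - y ^ i) ^ n = ∑ k ∈ range (n + 1), (-y ^ i) ^ k * n.choose k := by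
    simpa [← sub_eq_neg_add] using add_pow (-y ^ i) 1 n
  have h₂ (k : ℕ) :
      (y ^ k - 1) ^ J = ∑ i ∈ range (J + 1), (y ^ k) ^ i * (-1) ^ (J - i) * J.choose i := by
    rw [sub_eq_add_neg, add_pow]
  simp_rw [h₁, h₂, mul_sum]
  rw [sum_comm]
  refine sum_congr rfl fun k _ => sum_congr rfl fun i _ => ?_
  rw [neg_pow (y ^ i), ← pow_mul, mul_comm i k]
  ring

lemma sum_range_succ_eq_add_sum_Icc {M : Type*} [AddCommMonoid M] (f : ℕ → M) (n : ℕ) :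
    ∑ k ∈ range (n + 1), f k = f 0 + ∑ k ∈ Icc 1 n, f k := by
  rw [range_eq_Ico, sum_eq_sum_Ico_succ_bot (Nat.zero_lt_succ n), zero_add, Nat.succ_eq_add_one,
    Ico_add_one_right_eq_Icc]

lemma sum_Icc_choose_mul_neg_one_pow {R : Type*} [CommRing R] {n : ℕ} (hn : n ≠ 0) :
    ∑ k ∈ Icc 1 n, (n.choose k : R) * (-1) ^ k = -1 := by
  have h := congrArg (Int.cast : ℤ → R) (Int.alternating_sum_range_choose_of_ne hn)
  push_cast at h
  rw [sum_range_succ_eq_add_sum_Icc] at h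
  simp only [pow_zero, Nat.choose_zero_right, Nat.cast_one, one_mul] at h
  simp_rw [mul_comm (n.choose _ : R)]
  linear_combination h

lemma sum_range_choose_mul_neg_one_pow_mul_one_sub_pow_eq_sum_Icc {R : Type*} [CommRing R]
    (y : R) (n : ℕ) {J : ℕ} (hJ : J ≠ 0) :
    ∑ i ∈ range (J + 1), (J.choose i : R) * (-1) ^ (J - i) * (1 - y ^ i) ^ n
      = ∑ k ∈ Icc 1 n, (n.choose k : R) * (-1) ^ k * (y ^ k - 1) ^ J := by
  rw [sum_range_choose_mul_neg_one_pow_mul_one_sub_pow, sum_range_succ_eq_add_sum_Icc]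
  simp [zero_pow hJ]

theorem alpha_tail_expansion_general (b x : ℝ) (hb0 : 0 < b) (hb1 : b < 1)
    (n : ℕ) (hn : 1 ≤ n) :
    HasSum (fun j : ℕ =>
        gchoose x ((j + 1) + 1) *
          ∑ i ∈ Finset.range ((j + 1) + 1),
            ((j + 1).choose i : ℝ) * (-1) ^ ((j + 1) - i) * (1 - b ^ i) ^ n)
      (x - ∑ k ∈ Finset.Icc 1 n,
          (n.choose k : ℝ) * (-1) ^ (k + 1) * ((1 - (b ^ (x : ℝ)) ^ k) / (1 - b ^ k))) := by
  have hbk (k : ℕ) (hk : k ∈ Icc 1 n) : |b ^ k - 1| < 1 ∧ b ^ k - 1 ≠ 0 := by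
    have h₀ : 0 < b ^ k := pow_pos hb0 k
    have h₁ : b ^ k < 1 := pow_lt_one₀ hb0.le hb1 (by grind)
    exact ⟨abs_lt.mpr ⟨by linarith, by linarith⟩, by linarith⟩
  have hseries := hasSum_sum fun k hk => (hasSum_choose_add_two_mul_pow x (hbk k hk).1
    (hbk k hk).2).mul_left ((n.choose k : ℝ) * (-1) ^ k)
  have hterm (j : ℕ) : ∑ k ∈ Icc 1 n, (n.choose k : ℝ) * (-1) ^ k *
      (Ring.choose x (j + 2) * (b ^ k - 1) ^ (j + 1)) = gchoose x ((j + 1) + 1) *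
        ∑ i ∈ range ((j + 1) + 1),
          ((j + 1).choose i : ℝ) * (-1) ^ ((j + 1) - i) * (1 - b ^ i) ^ n := by
    rw [sum_range_choose_mul_neg_one_pow_mul_one_sub_pow_eq_sum_Icc _ _ (Nat.add_one_ne_zero j),
      mul_sum, gchoose_eq_ringChoose]
    exact sum_congr rfl fun k _ => by ring
  have hval : ∑ k ∈ Icc 1 n, (n.choose k : ℝ) * (-1) ^ k *
      (((1 + (b ^ k - 1)) ^ x - 1) / (b ^ k - 1) - x) = x - ∑ k ∈ Icc 1 n,
        (n.choose k : ℝ) * (-1) ^ (k + 1) * ((1 - (b ^ (x : ℝ)) ^ k) / (1 - b ^ k)) := by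
    have hk (k : ℕ) : (n.choose k : ℝ) * (-1) ^ k * (((b ^ k) ^ x - 1) / (b ^ k - 1)) =
        -((n.choose k : ℝ) * (-1) ^ (k + 1) * ((1 - (b ^ x) ^ k) / (1 - b ^ k))) := by
      rw [Real.rpow_pow_comm hb0.le, ← neg_div_neg_eq, pow_succ]
      ring
    simp only [add_sub_cancel, mul_sub, sum_sub_distrib, hk, sum_neg_distrib, ← sum_mul,
      sum_Icc_choose_mul_neg_one_pow (R := ℝ) (by omega : n ≠ 0)]
    ring
  simpa only [hterm, hval] using hseries

theorem alpha_tail_expansion (b x : ℝ) (hb0 : 0 < b) (hb1 : b < 1)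
    (hx0 : 0 < x) (hx1 : x < 1) (n : ℕ) (hn : 1 ≤ n) :
    HasSum (fun j : ℕ =>
        gchoose x ((j + 1) + 1) *
          ∑ i ∈ Finset.range ((j + 1) + 1),
            ((j + 1).choose i : ℝ) * (-1) ^ ((j + 1) - i) * (1 - b ^ i) ^ n)
      (x - ∑ k ∈ Finset.Icc 1 n,
          (n.choose k : ℝ) * (-1) ^ (k + 1) * ((1 - (b ^ (x : ℝ)) ^ k) / (1 - b ^ k))) :=
  alpha_tail_expansion_general b x hb0 hb1 n hn
end
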